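/- arXiv:2210.00584 — 2 statements merged into one kernel-verified Lean document; each statement's English description precedes it below -/
import Mathlib

section
/- Let C be a finite set of n clients, let 1 ≤ k ≤ n, let f : Finset Client → Label be a base FL algorithm, let y be a label, and let m be a natural number with m ≤ n − k. If for every label j ≠ y one has p_y(C, f) − p_j(C, f) > 2 − 2·C(n−m,k)/C(n,k), then for every finite set C' of clients with |C'| = n and |C' \ C| ≤ m, and for every label j ≠ y, one has N_j(C', f) < N_y(C', f); i.e., the majority vote over the k-element subsets of C' still uniquely selects y. -/
/-!
Let `D = C' ∩ C`, which has at least `n - m` clients. Every `k`-subset of `D` is a `k`-subset of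
both `C` and `C'`, so passing from `C` to `C'` changes each label count by at most the number
`C(n,k) - C(|D|,k) ≤ C(n,k) - C(n-m,k)` of `k`-subsets not inside `D`. Hence the gap
`N_y - N_j` can shrink by at most `2 (C(n,k) - C(n-m,k))`, which is exactly what the hypothesis
allows for.
-/

open Finset

/-- Label count: number of `k`-element subsets `T` of `S` with `f T = j`. -/
def labelCount {Client Label : Type} [DecidableEq Client] [DecidableEq Label]
    (k : ℕ) (f : Finset Client → Label) (S : Finset Client) (j : Label) : ℕ :=
  ((S.powersetCard k).filter (fun T => f T = j)).card

/-- Label probability: `N_j(S, f) / C(|S|, k)` as a real number. -/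
noncomputable def labelProb {Client Label : Type} [DecidableEq Client] [DecidableEq Label]
    (k : ℕ) (f : Finset Client → Label) (S : Finset Client) (j : Label) : ℝ :=
  (labelCount k f S j : ℝ) / (Nat.choose S.card k : ℝ)

section LabelCount

variable {Client Label : Type} [DecidableEq Client] [DecidableEq Label]
  (k : ℕ) (f : Finset Client → Label)

lemma labelCount_mono {D S : Finset Client} (h : D ⊆ S) (j : Label) :
    labelCount k f D j ≤ labelCount k f S j :=
  card_le_card (filter_subset_filter _ (powersetCard_mono h))

lemma labelCount_le_add_choose_sub {D S : Finset Client} (h : D ⊆ S) (j : Label) :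
    labelCount k f S j ≤ labelCount k f D j + (S.card.choose k - D.card.choose k) := by
  have hsdiff : (S.powersetCard k).filter (fun T => f T = j) \
      (D.powersetCard k).filter (fun T => f T = j) ⊆ S.powersetCard k \ D.powersetCard k := by
    intro T
    simp only [mem_sdiff, mem_filter]
    tauto
  have := card_le_card hsdiff
  rw [card_sdiff_of_subset (filter_subset_filter _ (powersetCard_mono h)),
    card_sdiff_of_subset (powersetCard_mono h), card_powersetCard, card_powersetCard] at this
  unfold labelCount
  omega

lemma labelCount_add_lt_of_labelProb_sub_gt {S : Finset Client} {y j : Label} {M : ℕ}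
    (h : labelProb k f S y - labelProb k f S j
      > 2 - 2 * (M : ℝ) / (S.card.choose k : ℝ)) :
    labelCount k f S j + 2 * S.card.choose k < labelCount k f S y + 2 * M := by
  unfold labelProb at h
  rcases Nat.eq_zero_or_pos (S.card.choose k) with hB | hB
  · -- `x / 0 = 0` turns the hypothesis into `0 > 2`
    simp only [hB, Nat.cast_zero, div_zero] at h
    norm_num at h
  · have hBR : (0 : ℝ) < S.card.choose k := by exact_mod_cast hB
    rw [← sub_div, gt_iff_lt, lt_div_iff₀ hBR, sub_mul, div_mul_cancel₀ _ hBR.ne'] at h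
    exact_mod_cast (by linarith : (labelCount k f S j : ℝ) + 2 * S.card.choose k
      < labelCount k f S y + 2 * M)

end LabelCount

theorem flcertP_certified_security_exact_probs_general
    {Client Label : Type} [DecidableEq Client] [DecidableEq Label]
    (n k : ℕ)
    (C : Finset Client) (hC : C.card = n)
    (f : Finset Client → Label) (y : Label)
    (m : ℕ)
    (hgap : ∀ j : Label, j ≠ y →
      labelProb k f C y - labelProb k f C j
        > 2 - 2 * (Nat.choose (n - m) k : ℝ) / (Nat.choose n k : ℝ)) :
    ∀ C' : Finset Client, C'.card = n → (C' \ C).card ≤ m →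
      ∀ j : Label, j ≠ y → labelCount k f C' j < labelCount k f C' y := by
  intro C' hC' hdiff j hj
  set D := C' ∩ C
  have hDC' : D ⊆ C' := inter_subset_left
  have hDC : D ⊆ C := inter_subset_right
  have hD : n - m ≤ D.card := by
    have : D.card + (C' \ C).card = C'.card := card_inter_add_card_sdiff C' C
    omega
  have hMD : (n - m).choose k ≤ D.card.choose k := Nat.choose_le_choose k hD
  have hDn : D.card.choose k ≤ n.choose k :=
    Nat.choose_le_choose k (hC ▸ card_le_card hDC)
  have hgapC := labelCount_add_lt_of_labelProb_sub_gt k f (hC ▸ hgap j hj)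
  have hyC := labelCount_le_add_choose_sub k f hDC y
  have hyC' := labelCount_mono k f hDC' y
  have hjC' := labelCount_le_add_choose_sub k f hDC' j
  have hjC := labelCount_mono k f hDC j
  rw [hC] at hgapC hyC
  rw [hC'] at hjC'
  omega

theorem flcertP_certified_security_exact_probs
    {Client Label : Type} [DecidableEq Client] [DecidableEq Label]
    (n k : ℕ) (hk1 : 1 ≤ k) (hkn : k ≤ n)
    (C : Finset Client) (hC : C.card = n)
    (f : Finset Client → Label) (y : Label)
    (m : ℕ) (hm : m ≤ n - k)
    (hgap : ∀ j : Label, j ≠ y →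
      labelProb k f C y - labelProb k f C j
        > 2 - 2 * (Nat.choose (n - m) k : ℝ) / (Nat.choose n k : ℝ)) :
    ∀ C' : Finset Client, C'.card = n → (C' \ C).card ≤ m →
      ∀ j : Label, j ≠ y → labelCount k f C' j < labelCount k f C' y :=
  flcertP_certified_security_exact_probs_general n k C hC f y m hgap
end

section
/- (Tightness, Case 3.) Let C and C' be finite sets of clients with |C| = |C'| = n, put m := |C' \ C| and q := C(n−m, k), and assume 1 ≤ m, 1 ≤ k, and k < n − m. Let y, z be distinct labels such that there exists a third label distinct from both, and let a, b be real numbers with 0 ≤ a, a·C(n,k) ≤ C(n,k) − q, q ≤ b·C(n,k), and a + b ≤ 1. Then there exists a function f : Finset Client → Label such that N_y(C, f) = ⌈a·C(n,k)⌉, N_z(C, f) = ⌊b·C(n,k)⌋, f T = z for every k-element subset T of C' (hence N_z(C', f) = C(n,k) and N_y(C', f) = 0). -/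
open Finset

/-!
The global models trained on the `k`-subsets of `C` may be labelled freely, except that those
lying inside `C'` are forced to predict `z`; there are exactly `q = C(n - m, k)` of them, as they
are the `k`-subsets of `C ∩ C'`. So it suffices to colour the `C(n, k)` subsets of `C` by `y`, `z`
and a third label `w` with `⌈a C(n,k)⌉` of colour `y` and `⌊b C(n,k)⌋ ≥ q` of colour `z`, the
forced ones among the latter; `a + b ≤ 1` leaves room for both.
-/

section Labeling

variable {α β : Type*} [DecidableEq α] [DecidableEq β]

theorem exists_labeling_with_counts (s t : Finset α) {y z w : β}
    (hyz : y ≠ z) (hwy : w ≠ y) (hwz : w ≠ z) {A B : ℕ}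
    (htB : #(s ∩ t) ≤ B) (hAB : A + B ≤ #s) :
    ∃ g : α → β, (∀ x ∈ t, g x = z) ∧
      #(s.filter (g · = y)) = A ∧ #(s.filter (g · = z)) = B := by
  obtain ⟨Z, htZ, hZs, hZ⟩ :=
    exists_subsuperset_card_eq inter_subset_left htB (by omega : B ≤ #s)
  obtain ⟨Y, hYsZ, hY⟩ := exists_subset_card_eq (s := s \ Z) (n := A)
    (by rw [card_sdiff_of_subset hZs]; omega)
  have hYtZ : ∀ x ∈ Y, x ∉ t ∪ Z := fun x hx hxtZ => by
    have ⟨hxs, hxZ⟩ := mem_sdiff.1 (hYsZ hx)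
    exact hxZ ((mem_union.1 hxtZ).elim (fun hxt => htZ (mem_inter.2 ⟨hxs, hxt⟩)) id)
  let g x := if x ∈ t ∪ Z then z else if x ∈ Y then y else w
  have hgz : ∀ x, g x = z ↔ x ∈ t ∪ Z := fun x => by
    simp only [g]; split_ifs <;> simp_all
  have hgy : ∀ x, g x = y ↔ x ∈ Y := fun x => by
    simp only [g]
    split_ifs with hxtZ hxY
    · exact ⟨fun h => absurd h.symm hyz, fun hxY => absurd hxtZ (hYtZ x hxY)⟩
    · simpa
    · simpa [hxY]
  refine ⟨g, fun x hx => (hgz x).2 (mem_union_left Z hx), ?_, ?_⟩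
  · rw [filter_congr fun x _ => hgy x, filter_mem_eq_inter,
      inter_eq_right.2 (hYsZ.trans sdiff_subset), hY]
  · rw [filter_congr fun x _ => hgz x, filter_mem_eq_inter, inter_union_distrib_left,
      inter_eq_right.2 hZs, union_eq_right.2 htZ, hZ]

end Labeling

section LabelCount

variable {Client Label : Type} [DecidableEq Client] [DecidableEq Label]

theorem labelCount_eq_choose_of_forall {k : ℕ} {f : Finset Client → Label} {S : Finset Client}
    {z : Label} (hf : ∀ T ∈ S.powersetCard k, f T = z) :
    labelCount k f S z = (#S).choose k := by
  rw [labelCount, filter_true_of_mem hf, card_powersetCard]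

theorem labelCount_eq_zero_of_forall {k : ℕ} {f : Finset Client → Label} {S : Finset Client}
    {y z : Label} (hyz : y ≠ z) (hf : ∀ T ∈ S.powersetCard k, f T = z) :
    labelCount k f S y = 0 := by
  rw [labelCount, card_eq_zero, filter_eq_empty_iff]
  exact fun T hT hTy => hyz (hTy ▸ hf T hT)

end LabelCount

theorem powersetCard_inter_powersetCard {α : Type*} [DecidableEq α] (k : ℕ) (s t : Finset α) :
    s.powersetCard k ∩ t.powersetCard k = (s ∩ t).powersetCard k := by
  ext u
  simp only [mem_inter, mem_powersetCard, subset_inter_iff]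
  tauto

theorem Int.ceil_add_floor_le_of_add_le_one {a b x : ℝ} (hx : 0 ≤ x) (hab : a + b ≤ 1) :
    ⌈a * x⌉ + ⌊b * x⌋ ≤ ⌈x⌉ := by
  rw [← Int.ceil_add_intCast]
  apply Int.ceil_mono
  nlinarith [Int.floor_le (b * x)]

theorem flcertP_tightness_case3_general
    {Client Label : Type} [DecidableEq Client] [DecidableEq Label]
    (n k : ℕ)
    (C C' : Finset Client) (hC : C.card = n) (hC' : C'.card = n)
    (m : ℕ) (hm : m = (C' \ C).card)
    (q : ℕ) (hq : q = Nat.choose (n - m) k)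
    (y z : Label) (hyz : y ≠ z) (hthird : ∃ w : Label, w ≠ y ∧ w ≠ z)
    (a b : ℝ) (ha0 : 0 ≤ a)
    (hb : (q : ℝ) ≤ b * (Nat.choose n k : ℝ))
    (hab1 : a + b ≤ 1) :
    ∃ f : Finset Client → Label,
      (labelCount k f C y : ℤ) = ⌈a * (Nat.choose n k : ℝ)⌉ ∧
      (labelCount k f C z : ℤ) = ⌊b * (Nat.choose n k : ℝ)⌋ ∧
      (∀ T ∈ C'.powersetCard k, f T = z) ∧
      labelCount k f C' z = Nat.choose n k ∧
      labelCount k f C' y = 0 := by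
  obtain ⟨w, hwy, hwz⟩ := hthird
  have hforced : #(C.powersetCard k ∩ C'.powersetCard k) = q := by
    rw [powersetCard_inter_powersetCard, card_powersetCard, hq, hm, ← hC',
      ← card_inter_add_card_sdiff C' C, Nat.add_sub_cancel, inter_comm]
  have hA : 0 ≤ ⌈a * (n.choose k : ℝ)⌉ := Int.ceil_nonneg (by positivity)
  have hB : (q : ℤ) ≤ ⌊b * (n.choose k : ℝ)⌋ := Int.le_floor.2 (mod_cast hb)
  have hAB := Int.ceil_add_floor_le_of_add_le_one (n.choose k).cast_nonneg hab1
  rw [Int.ceil_natCast] at hAB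
  obtain ⟨f, hfz, hfy, hfz'⟩ := exists_labeling_with_counts (C.powersetCard k) (C'.powersetCard k)
    hyz hwy hwz (A := ⌈a * (n.choose k : ℝ)⌉.toNat) (B := ⌊b * (n.choose k : ℝ)⌋.toNat)
    (by omega) (by rw [card_powersetCard, hC]; omega)
  refine ⟨f, ?_, ?_, hfz, ?_, labelCount_eq_zero_of_forall hyz hfz⟩
  · rw [labelCount, hfy]; omega
  · rw [labelCount, hfz']; omega
  · rw [labelCount_eq_choose_of_forall hfz, hC']

theorem flcertP_tightness_case3
    {Client Label : Type} [DecidableEq Client] [DecidableEq Label]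
    (n k : ℕ)
    (C C' : Finset Client) (hC : C.card = n) (hC' : C'.card = n)
    (m : ℕ) (hm : m = (C' \ C).card)
    (q : ℕ) (hq : q = Nat.choose (n - m) k)
    (hm1 : 1 ≤ m) (hk1 : 1 ≤ k) (hknm : k < n - m)
    (y z : Label) (hyz : y ≠ z) (hthird : ∃ w : Label, w ≠ y ∧ w ≠ z)
    (a b : ℝ) (ha0 : 0 ≤ a)
    (ha : a * (Nat.choose n k : ℝ) ≤ (Nat.choose n k : ℝ) - (q : ℝ))
    (hb : (q : ℝ) ≤ b * (Nat.choose n k : ℝ))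
    (hab1 : a + b ≤ 1) :
    ∃ f : Finset Client → Label,
      (labelCount k f C y : ℤ) = ⌈a * (Nat.choose n k : ℝ)⌉ ∧
      (labelCount k f C z : ℤ) = ⌊b * (Nat.choose n k : ℝ)⌋ ∧
      (∀ T ∈ C'.powersetCard k, f T = z) ∧
      labelCount k f C' z = Nat.choose n k ∧
      labelCount k f C' y = 0 :=
  flcertP_tightness_case3_general n k C C' hC hC' m hm q hq y z hyz hthird a b ha0 hb hab1
end
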